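/- arXiv:solv-int/9808016 — 3 statements merged into one kernel-verified Lean document; each statement's English description precedes it below -/
import Mathlib

section
/- Let f(x) = μ/x, g(y) = ν/y, h(z) = λ/z with λ + μ + ν = 0 and λμν ≠ 0. Then the map T(x,y) = (g(y) + h(x+y), -f(x) - h(x+y)) defined for x, y, x+y nonzero has an inverse of the same form: T⁻¹(X,Y) = (G(Y) + H(X+Y), -F(X) - H(X+Y)) where F(X) = μ/X, G(Y) = ν/Y, H(Z) = λ/Z. Concretely, if X = ν/y + λ/(x+y) and Y = -μ/x - λ/(x+y), then x = ν/Y + λ/(X+Y) and y = -μ/X - λ/(X+Y), whenever all denominators are nonzero. -/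
/-!
The map `T(x, y) = (ν/y + λ/(x+y), -μ/x - λ/(x+y))` is an involution. Putting
`k = νx - μy` and using `λ = -μ - ν`, one finds `T(x, y) = (k/(y(x+y)), k/(x(x+y)))`, so the
image point `(X, Y)` satisfies `X + Y = k/(xy)`, and substituting back gives `T(X, Y) = (x, y)`
as soon as `k ≠ 0`, i.e. `X ≠ 0`.
-/

variable {K : Type*} [Field K]

def legendreMap (lam mu nu : K) (p : K × K) : K × K :=
  (nu / p.2 + lam / (p.1 + p.2), -(mu / p.1) - lam / (p.1 + p.2))

section

variable {lam mu nu x y : K}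

theorem legendreMap_eq (hsum : lam + mu + nu = 0) (hx : x ≠ 0) (hy : y ≠ 0) (hxy : x + y ≠ 0) :
    legendreMap lam mu nu (x, y) =
      ((nu * x - mu * y) / (y * (x + y)), (nu * x - mu * y) / (x * (x + y))) := by
  obtain rfl : lam = -mu - nu := by linear_combination hsum
  simp only [legendreMap, Prod.mk.injEq]
  constructor <;> field_simp <;> ring

theorem legendreMap_legendreMap (hsum : lam + mu + nu = 0) (hx : x ≠ 0) (hy : y ≠ 0)
    (hxy : x + y ≠ 0) (hk : nu * x - mu * y ≠ 0) :
    legendreMap lam mu nu (legendreMap lam mu nu (x, y)) = (x, y) := by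
  rw [legendreMap_eq hsum hx hy hxy]
  obtain rfl : lam = -mu - nu := by linear_combination hsum
  simp only [legendreMap, Prod.mk.injEq]
  constructor <;> field_simp <;> ring

end

theorem legendre_inverse_case_A_general (lam mu nu x y X Y : ℝ)
    (hsum : lam + mu + nu = 0)
    (hx : x ≠ 0) (hy : y ≠ 0) (hxy : x + y ≠ 0)
    (hX : X = nu / y + lam / (x + y)) (hY : Y = -(mu / x) - lam / (x + y))
    (hX0 : X ≠ 0) :
    x = nu / Y + lam / (X + Y) ∧ y = -(mu / X) - lam / (X + Y) := by
  have hT : legendreMap lam mu nu (x, y) = (X, Y) := by rw [hX, hY]; rfl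
  have hk : nu * x - mu * y ≠ 0 := by
    rw [legendreMap_eq hsum hx hy hxy, Prod.mk.injEq] at hT
    rw [← hT.1] at hX0
    exact (div_ne_zero_iff.mp hX0).1
  have hinv := legendreMap_legendreMap hsum hx hy hxy hk
  rw [hT] at hinv
  exact Prod.ext_iff.mp hinv.symm

theorem legendre_inverse_case_A (lam mu nu x y X Y : ℝ)
    (hsum : lam + mu + nu = 0) (hprod : lam * mu * nu ≠ 0)
    (hx : x ≠ 0) (hy : y ≠ 0) (hxy : x + y ≠ 0)
    (hX : X = nu / y + lam / (x + y)) (hY : Y = -(mu / x) - lam / (x + y))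
    (hX0 : X ≠ 0) (hY0 : Y ≠ 0) (hXY0 : X + Y ≠ 0) :
    x = nu / Y + lam / (X + Y) ∧ y = -(mu / X) - lam / (X + Y) :=
  legendre_inverse_case_A_general lam mu nu x y X Y hsum hx hy hxy hX hY hX0
end

section
/- For the discrete equation with f(x)=μ/x, g(y)=ν/y, h(z)=λ/z, λ+μ+ν=0: the matrices A = (k-μ)I - νP(q, q₀₋₁) - λP(q, q₋₁₋₁), B = kI - μP(q, q₁₀) - λP(q, q₁₁), C = (k+ν)I - μP(q, q₋₁₀) - νP(q, q₀₁) satisfy C·B·A = k(k-μ)(k+ν)·I, where all the field values q, q₁₀, q₀₁, q₁₁, q₋₁₀, q₀₋₁, q₋₁₋₁ are pairwise distinct real numbers satisfying the lattice equation μ/(q₁₀-q) + μ/(q₋₁₀-q) + ν/(q₀₁-q) + ν/(q₀₋₁-q) + λ/(q₁₁-q) + λ/(q₋₁₋₁-q) = 0. -/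
/-!
Every `P q x` with `x ≠ q` is a rank-one projection `vecMulVec (projCol q x) b` with the common
row `b = ![1, q]` and `b ⬝ᵥ projCol q x = 1`. Hence `A`, `B`, `C` all have the shape
`α • 1 + vecMulVec c b`, and two such matrices multiply as
`(α • 1 + vecMulVec c b) * (β • 1 + vecMulVec d b) = α • (β • 1 + vecMulVec (c + d) b)`
as soon as `β + b ⬝ᵥ d = α`. Because `λ + μ + ν = 0`, this compatibility holds for `C * B` and
then for `(C * B) * A`, giving `C * B * A = (k + ν) • k • ((k - μ) • 1 + vecMulVec c b)` with
`c = c_C + c_B + c_A`. Finally `c = 0`: its second coordinate is the lattice equation, and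
`b ⬝ᵥ c = -2 (λ + μ + ν) = 0`.
-/

noncomputable def P (u v : ℝ) : Matrix (Fin 2) (Fin 2) ℝ :=
  (1 / (u - v)) • !![-v, -(u*v); 1, u]

open Matrix

theorem smul_one_add_vecMulVec_mul_smul_one_add_vecMulVec {n R : Type*} [Fintype n]
    [DecidableEq n] [CommRing R] {a a' : R} {b c d : n → R} (h : a' + b ⬝ᵥ d = a) :
    (a • 1 + vecMulVec c b) * (a' • 1 + vecMulVec d b)
      = a • (a' • 1 + vecMulVec (c + d) b) := by
  subst h
  simp only [add_mul, mul_add, smul_mul_assoc, mul_smul_comm, one_mul, mul_one,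
    vecMulVec_mul_vecMulVec, vecMulVec_smul, add_vecMulVec]
  module

noncomputable def projCol (u v : ℝ) : Fin 2 → ℝ := (v - u)⁻¹ • ![v, -1]

theorem P_eq_vecMulVec (u v : ℝ) : P u v = vecMulVec (projCol u v) ![1, u] := by
  have h : (v - u)⁻¹ = -(u - v)⁻¹ := by rw [← inv_neg, neg_sub]
  ext i j
  fin_cases i <;> fin_cases j <;> simp [P, projCol, vecMulVec_apply, h]
  ring

theorem dotProduct_projCol {u v : ℝ} (h : u ≠ v) :
    (![1, u] : Fin 2 → ℝ) ⬝ᵥ projCol u v = 1 := by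
  have : v - u ≠ 0 := sub_ne_zero.mpr h.symm
  simp [projCol, dotProduct, Fin.sum_univ_two]
  field_simp
  ring

theorem smul_one_sub_smul_P_sub_smul_P (a b c u v w : ℝ) :
    a • (1 : Matrix (Fin 2) (Fin 2) ℝ) - b • P u v - c • P u w
      = a • 1 + vecMulVec (-(b • projCol u v) - c • projCol u w) ![1, u] := by
  rw [P_eq_vecMulVec, P_eq_vecMulVec, sub_vecMulVec, neg_vecMulVec, smul_vecMulVec,
    smul_vecMulVec]
  abel

theorem dotProduct_neg_smul_projCol_sub_smul_projCol {b c u v w : ℝ} (hv : u ≠ v) (hw : u ≠ w) :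
    (![1, u] : Fin 2 → ℝ) ⬝ᵥ (-(b • projCol u v) - c • projCol u w) = -b - c := by
  rw [dotProduct_sub, dotProduct_neg, dotProduct_smul, dotProduct_smul, dotProduct_projCol hv,
    dotProduct_projCol hw, smul_eq_mul, smul_eq_mul, mul_one, mul_one]

theorem eq_zero_of_dotProduct_eq_zero_of_apply_one {u : ℝ} {s : Fin 2 → ℝ}
    (h : ![1, u] ⬝ᵥ s = 0) (h1 : s 1 = 0) : s = 0 := by
  simp only [dotProduct, Fin.sum_univ_two] at h
  ext i
  fin_cases i <;> simp_all

theorem projCol_lattice_combination_eq_zero {lam mu nu q q10 q01 q11 qm10 q0m1 qm1m1 : ℝ}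
    (hsum : lam + mu + nu = 0) (h10 : q ≠ q10) (h01 : q ≠ q01) (h11 : q ≠ q11)
    (hm10 : q ≠ qm10) (h0m1 : q ≠ q0m1) (hm1m1 : q ≠ qm1m1)
    (hlat : mu / (q10 - q) + mu / (qm10 - q) + nu / (q01 - q) + nu / (q0m1 - q)
      + lam / (q11 - q) + lam / (qm1m1 - q) = 0) :
    (-(mu • projCol q qm10) - nu • projCol q q01) + (-(mu • projCol q q10) - lam • projCol q q11)
      + (-(nu • projCol q q0m1) - lam • projCol q qm1m1) = 0 := by
  apply eq_zero_of_dotProduct_eq_zero_of_apply_one (u := q)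
  · rw [dotProduct_add, dotProduct_add, dotProduct_neg_smul_projCol_sub_smul_projCol hm10 h01,
      dotProduct_neg_smul_projCol_sub_smul_projCol h10 h11,
      dotProduct_neg_smul_projCol_sub_smul_projCol h0m1 hm1m1]
    linear_combination -2 * hsum
  · simp [projCol, div_eq_mul_inv] at hlat ⊢
    linear_combination hlat

theorem CBA_scalar (k lam mu nu : ℝ) (hsum : lam + mu + nu = 0)
    (q q10 q01 q11 qm10 q0m1 qm1m1 : ℝ)
    (hdist : [q, q10, q01, q11, qm10, q0m1, qm1m1].Pairwise (· ≠ ·))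
    (hlat : mu / (q10 - q) + mu / (qm10 - q) + nu / (q01 - q) + nu / (q0m1 - q)
      + lam / (q11 - q) + lam / (qm1m1 - q) = 0)
    (A B C : Matrix (Fin 2) (Fin 2) ℝ)
    (hA : A = (k - mu) • (1 : Matrix (Fin 2) (Fin 2) ℝ) - nu • P q q0m1 - lam • P q qm1m1)
    (hB : B = k • (1 : Matrix (Fin 2) (Fin 2) ℝ) - mu • P q q10 - lam • P q q11)
    (hC : C = (k + nu) • (1 : Matrix (Fin 2) (Fin 2) ℝ) - mu • P q qm10 - nu • P q q01) :
    C * B * A = (k * (k - mu) * (k + nu)) • (1 : Matrix (Fin 2) (Fin 2) ℝ) := by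
  obtain ⟨hq, -⟩ := List.pairwise_cons.mp hdist
  simp only [List.mem_cons, List.not_mem_nil, or_false, forall_eq_or_imp, forall_eq] at hq
  obtain ⟨h10, h01, h11, hm10, h0m1, hm1m1⟩ := hq
  have hCB : k + (-mu - lam) = k + nu := by linarith
  have hBA : k - mu + (-nu - lam) = k := by linarith
  rw [hA, hB, hC, smul_one_sub_smul_P_sub_smul_P, smul_one_sub_smul_P_sub_smul_P,
    smul_one_sub_smul_P_sub_smul_P,
    smul_one_add_vecMulVec_mul_smul_one_add_vecMulVec
      (by rwa [dotProduct_neg_smul_projCol_sub_smul_projCol h10 h11]),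
    smul_mul_assoc,
    smul_one_add_vecMulVec_mul_smul_one_add_vecMulVec
      (by rwa [dotProduct_neg_smul_projCol_sub_smul_projCol h0m1 hm1m1]),
    projCol_lattice_combination_eq_zero hsum h10 h01 h11 hm10 h0m1 hm1m1 hlat,
    zero_vecMulVec, add_zero, smul_smul, smul_smul]
  ring_nf
end

section
/- Let λ, μ, ν be reals with λμν = -1 (case I), and define f(x) = log((μeˣ+1)/(eˣ+μ)), g(y) = log((νeʸ+1)/(eʸ+ν)), h(z) = log((λe^z+1)/(e^z+λ)). Then the reciprocal-derivative functions u = 1/f', v = 1/g', w = 1/h', given explicitly by u(x) = (μeˣ+1)(eˣ+μ)/((μ²-1)eˣ), etc., satisfy the functional equation [v(y)+w(x+y)]u'(x) + [u(x)+w(x+y)]v'(y) = [u(x)+v(y)]w'(x+y) for all x, y where all expressions are defined. -/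
/-!
Dividing out `eˣ` turns each function into an affine function of `cosh`:
`(m eˣ + 1)(eˣ + m) / ((m² - 1) eˣ) = α m + β m cosh x` with `α m = (m² + 1)/(m² - 1)` and
`β m = 2m/(m² - 1)`. After the addition formulas for `cosh (x + y)` and `sinh (x + y)` and
`cosh² - sinh² = 1`, the functional equation for `αᵢ + βᵢ cosh` reduces to the three relations
`βᵢ βⱼ = βₖ (αᵢ + αⱼ)`, one for each labelling `{i, j, k}` of the indices, and for the
coefficients above each of them amounts to `λμν = -1`.
-/

open Real

/-- For `m = eᵗ` this is `coth t`. -/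
noncomputable def cothCoeff (m : ℝ) : ℝ := (m ^ 2 + 1) / (m ^ 2 - 1)

/-- For `m = eᵗ` this is `csch t`. -/
noncomputable def cschCoeff (m : ℝ) : ℝ := 2 * m / (m ^ 2 - 1)

theorem div_mul_exp_eq_cothCoeff_add_cschCoeff_mul_cosh (m : ℝ) :
    (fun x => (m * exp x + 1) * (exp x + m) / ((m ^ 2 - 1) * exp x))
      = fun x => cothCoeff m + cschCoeff m * cosh x := by
  funext x
  have hdiv : (m * exp x + 1) * (exp x + m) / exp x = m ^ 2 + 1 + 2 * m * cosh x := by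
    rw [cosh_eq, exp_neg]
    field_simp
    ring
  rw [div_mul_eq_div_div_swap, hdiv, cothCoeff, cschCoeff]
  ring

theorem deriv_const_add_mul_cosh (a b x : ℝ) :
    deriv (fun x => a + b * cosh x) x = b * sinh x := by
  simp

theorem cschCoeff_mul_cschCoeff {k m n : ℝ} (h : k * m * n = -1)
    (hk : k ^ 2 ≠ 1) (hm : m ^ 2 ≠ 1) (hn : n ^ 2 ≠ 1) :
    cschCoeff m * cschCoeff n = cschCoeff k * (cothCoeff m + cothCoeff n) := by
  have hk' : k ^ 2 - 1 ≠ 0 := sub_ne_zero.mpr hk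
  have hm' : m ^ 2 - 1 ≠ 0 := sub_ne_zero.mpr hm
  have hn' : n ^ 2 - 1 ≠ 0 := sub_ne_zero.mpr hn
  rw [cschCoeff, cschCoeff, cschCoeff, cothCoeff, cothCoeff]
  field_simp
  linear_combination 2 * (k - m * n) * h

theorem functional_eq_of_const_add_mul_cosh {a₁ b₁ a₂ b₂ a₃ b₃ : ℝ}
    (h₁₂ : b₁ * b₂ = b₃ * (a₁ + a₂)) (h₂₃ : b₂ * b₃ = b₁ * (a₂ + a₃))
    (h₁₃ : b₁ * b₃ = b₂ * (a₁ + a₃)) (x y : ℝ) :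
    (a₂ + b₂ * cosh y + (a₃ + b₃ * cosh (x + y))) * (b₁ * sinh x)
        + (a₁ + b₁ * cosh x + (a₃ + b₃ * cosh (x + y))) * (b₂ * sinh y)
      = (a₁ + b₁ * cosh x + (a₂ + b₂ * cosh y)) * (b₃ * sinh (x + y)) := by
  rw [cosh_add, sinh_add]
  linear_combination (sinh x * cosh y + cosh x * sinh y) * h₁₂ - sinh x * h₂₃ - sinh y * h₁₃
    - b₁ * b₃ * sinh y * cosh_sq_sub_sinh_sq x - b₂ * b₃ * sinh x * cosh_sq_sub_sinh_sq y

theorem functional_eq_case_I (lam mu nu : ℝ)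
    (hprod : lam * mu * nu = -1)
    (hmu : mu ^ 2 ≠ 1) (hnu : nu ^ 2 ≠ 1) (hlam : lam ^ 2 ≠ 1)
    (u v w : ℝ → ℝ)
    (hu : u = fun x => (mu * Real.exp x + 1) * (Real.exp x + mu) / ((mu ^ 2 - 1) * Real.exp x))
    (hv : v = fun y => (nu * Real.exp y + 1) * (Real.exp y + nu) / ((nu ^ 2 - 1) * Real.exp y))
    (hw : w = fun s => (lam * Real.exp s + 1) * (Real.exp s + lam) / ((lam ^ 2 - 1) * Real.exp s)) :
    ∀ x y : ℝ,
      (v y + w (x + y)) * deriv u x + (u x + w (x + y)) * deriv v y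
        = (u x + v y) * deriv w (x + y) := by
  intro x y
  rw [hu, hv, hw, div_mul_exp_eq_cothCoeff_add_cschCoeff_mul_cosh,
    div_mul_exp_eq_cothCoeff_add_cschCoeff_mul_cosh, div_mul_exp_eq_cothCoeff_add_cschCoeff_mul_cosh]
  simp only [deriv_const_add_mul_cosh]
  exact functional_eq_of_const_add_mul_cosh
    (cschCoeff_mul_cschCoeff hprod hlam hmu hnu)
    (cschCoeff_mul_cschCoeff (by linear_combination hprod) hmu hnu hlam)
    (cschCoeff_mul_cschCoeff (by linear_combination hprod) hnu hmu hlam) x y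
end
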